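/- Let G be a Δ-critical graph and let uv be an edge of G with d(u) + d(v) = Δ + 2. Then every vertex of N({u,v}) \ {u,v} (i.e., every vertex other than u and v that is adjacent to u or v) has degree Δ. -/

import Mathlib

open SimpleGraph Finset

variable {V : Type*}

/-- `G` has a `K₅` minor: five pairwise disjoint nonempty connected branch sets,
pairwise joined by an edge of `G`. -/
def SimpleGraph.HasK5Minor (G : SimpleGraph V) : Prop :=
  ∃ S : Fin 5 → Set V,
    (∀ i, (S i).Nonempty) ∧
    (∀ i, (G.induce (S i)).Connected) ∧
    (∀ i j, i ≠ j → Disjoint (S i) (S j)) ∧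
    (∀ i j, i ≠ j → ∃ u ∈ S i, ∃ v ∈ S j, G.Adj u v)

/-- The chromatic index of `G`, as the chromatic number of its line graph. -/
noncomputable def SimpleGraph.chromaticIndex (G : SimpleGraph V) : ℕ∞ :=
  G.lineGraph.chromaticNumber

/-- `G` is a `Δ`-critical graph (`Δ = G.maxDegree`): it is connected and class 2,
and deleting any edge decreases the chromatic index. -/
def SimpleGraph.IsDeltaCritical [Fintype V] (G : SimpleGraph V) [DecidableRel G.Adj] : Prop :=
  G.Connected ∧ G.chromaticIndex = (G.maxDegree : ℕ∞) + 1 ∧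
    ∀ e ∈ G.edgeSet, (G.deleteEdges {e}).chromaticIndex < G.chromaticIndex

/-- The neighborhood `N(X)` of a set of vertices `X`. -/
def SimpleGraph.setNbhd (G : SimpleGraph V) (X : Set V) : Set V :=
  {v | v ∉ X ∧ ∃ u ∈ X, G.Adj u v}

/-!
Color `G - uv` with `Δ` colors. No color is missing at both `u` and `v` (it would color `uv`), and
as `d(u) + d(v) = Δ + 2` every color is missing at exactly one of them. Suppose a neighbor `z ≠ v`
of `u` has `d(z) < Δ`, so some color `γ` is missing at `z`. It is not missing at `u`: otherwise
recoloring `uz` with `γ` would free the old color of `uz` at `u`, where it is already missing at `v`.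
So `γ` is missing at `v`. Take `α` missing at `u` and swap `α` and `γ` on the `α/γ` Kempe chain
through `z`. If the chain misses `u` or `v`, the swapped coloring is of one of the forbidden kinds
above. Otherwise `u`, `v` and `z` are three vertices of degree at most one in a connected graph of
maximum degree two, which is impossible.
-/

open Function

namespace SimpleGraph

variable {κ : Type*} {A A' : SimpleGraph V} {C : Sym2 V → κ} {x y z a b : V} {α β γ : κ}

/-- Edge colorings are functions on all of `Sym2 V`; only their values on edges of `A` matter. -/
def IsEdgeColoring (A : SimpleGraph V) (C : Sym2 V → κ) : Prop :=
  ∀ ⦃x y z⦄, A.Adj x y → A.Adj x z → y ≠ z → C s(x, y) ≠ C s(x, z)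

def IsMissing (A : SimpleGraph V) (C : Sym2 V → κ) (x : V) (α : κ) : Prop :=
  ∀ ⦃y⦄, A.Adj x y → C s(x, y) ≠ α

lemma IsEdgeColoring.mono (h : A' ≤ A) (hC : A.IsEdgeColoring C) : A'.IsEdgeColoring C :=
  fun _ _ _ hxy hxz => hC (h hxy) (h hxz)

lemma IsMissing.mono (h : A' ≤ A) (hx : A.IsMissing C x α) : A'.IsMissing C x α :=
  fun _ hxy => hx (h hxy)

lemma IsEdgeColoring.colorable [Fintype κ] (hC : A.IsEdgeColoring C) :
    A.lineGraph.Colorable (Fintype.card κ) := by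
  refine (Coloring.mk (G := A.lineGraph) (fun e => C e) fun {e₁ e₂} h => ?_).colorable
  obtain ⟨hne, w, hw₁, hw₂⟩ := lineGraph_adj_iff_exists.1 h
  obtain ⟨a, ha⟩ := Sym2.mem_iff_exists.1 hw₁
  obtain ⟨b, hb⟩ := Sym2.mem_iff_exists.1 hw₂
  have hab : a ≠ b := by
    rintro rfl
    exact hne (Subtype.ext (ha.trans hb.symm))
  rw [ha, hb]
  exact hC (A.mem_edgeSet.1 (ha ▸ e₁.2)) (A.mem_edgeSet.1 (hb ▸ e₂.2)) hab

lemma Colorable.exists_isEdgeColoring {k : ℕ} (h : A.lineGraph.Colorable k) (hk : 0 < k) :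
    ∃ C : Sym2 V → Fin k, A.IsEdgeColoring C := by
  classical
  obtain ⟨c⟩ := h
  refine ⟨fun e => if he : e ∈ A.edgeSet then c ⟨e, he⟩ else ⟨0, hk⟩, fun x y z hxy hxz hyz => ?_⟩
  simp only [dif_pos (A.mem_edgeSet.2 hxy), dif_pos (A.mem_edgeSet.2 hxz)]
  refine c.valid (lineGraph_adj_iff_exists.2 ⟨fun h => hyz ?_, x, by simp, by simp⟩)
  exact Sym2.congr_right.1 (congrArg Subtype.val h)

section Missing

variable [Fintype V] [DecidableRel A.Adj] [DecidableEq κ]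

lemma isMissing_iff_notMem_image :
    A.IsMissing C x α ↔ α ∉ (A.neighborFinset x).image (fun y => C s(x, y)) := by
  simp [IsMissing]

lemma exists_isMissing_of_degree_lt [Fintype κ] (h : A.degree x < Fintype.card κ) :
    ∃ α, A.IsMissing C x α := by
  have hcard : #((A.neighborFinset x).image (fun y => C s(x, y))) < #(univ : Finset κ) :=
    (card_image_le.trans_eq (A.card_neighborFinset_eq_degree x)).trans_lt h
  obtain ⟨α, -, hα⟩ := exists_mem_notMem_of_card_lt_card hcard
  exact ⟨α, isMissing_iff_notMem_image.2 hα⟩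

/-- The colors present at `u` and at `v` cover `κ`, so at most `d(u) + d(v) - |κ| ≤ 0` of them are
present at both. -/
lemma isMissing_or_isMissing [Fintype κ] {u v : V}
    (hdeg : A.degree u + A.degree v ≤ Fintype.card κ)
    (hdisj : ∀ β, ¬(A.IsMissing C u β ∧ A.IsMissing C v β)) (β : κ) :
    A.IsMissing C u β ∨ A.IsMissing C v β := by
  set U := (A.neighborFinset u).image (fun y => C s(u, y))
  set W := (A.neighborFinset v).image (fun y => C s(v, y))
  have hunion : U ∪ W = univ := by
    refine eq_univ_of_forall fun γ => ?_
    have := hdisj γ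
    rw [isMissing_iff_notMem_image, isMissing_iff_notMem_image] at this
    rw [mem_union]
    tauto
  have hU : #U ≤ A.degree u := card_image_le.trans_eq (A.card_neighborFinset_eq_degree u)
  have hW : #W ≤ A.degree v := card_image_le.trans_eq (A.card_neighborFinset_eq_degree v)
  have hinter : #(U ∩ W) = 0 := by
    have := card_union_add_card_inter U W
    rw [hunion, card_univ] at this
    omega
  by_contra! h
  rw [isMissing_iff_notMem_image, isMissing_iff_notMem_image, not_not, not_not] at h
  exact (card_pos.2 ⟨β, mem_inter.2 h⟩).ne' hinter

end Missing

section Update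

variable [DecidableEq V]

lemma IsEdgeColoring.update (hC : (A.deleteEdges {s(a, b)}).IsEdgeColoring C)
    (ha : (A.deleteEdges {s(a, b)}).IsMissing C a β)
    (hb : (A.deleteEdges {s(a, b)}).IsMissing C b β) :
    A.IsEdgeColoring (Function.update C s(a, b) β) := by
  have hdel : ∀ ⦃x y⦄, A.Adj x y → s(x, y) ≠ s(a, b) → (A.deleteEdges {s(a, b)}).Adj x y :=
    fun x y hxy hne => deleteEdges_adj.2 ⟨hxy, hne⟩
  have hmiss : ∀ ⦃x y w⦄, s(x, w) = s(a, b) → A.Adj x y → s(x, y) ≠ s(a, b) →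
      C s(x, y) ≠ β := by
    intro x y w hxw hxy hne
    rcases Sym2.mem_iff.1 (hxw ▸ Sym2.mem_mk_left x w) with rfl | rfl
    exacts [ha (hdel hxy hne), hb (hdel hxy hne)]
  intro x y z hxy hxz hyz
  by_cases hy : s(x, y) = s(a, b) <;> by_cases hz : s(x, z) = s(a, b)
  · exact absurd (Sym2.congr_right.1 (hy.trans hz.symm)) hyz
  · rw [update_of_ne hz, hy, update_self]
    exact (hmiss hy hxz hz).symm
  · rw [update_of_ne hy, hz, update_self]
    exact hmiss hz hxy hy
  · rw [update_of_ne hy, update_of_ne hz]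
    exact hC (hdel hxy hy) (hdel hxz hz) hyz

lemma IsEdgeColoring.isMissing_update (hC : A.IsEdgeColoring C) (hab : A.Adj a b)
    (hβ : C s(a, b) ≠ β) : A.IsMissing (Function.update C s(a, b) β) a (C s(a, b)) := by
  intro y hay
  by_cases hy : y = b
  · subst hy
    rw [update_self]
    exact hβ.symm
  · rw [update_of_ne fun h => hy (Sym2.congr_right.1 h)]
    exact hC hay hab hy

lemma IsMissing.update (hx : A.IsMissing C x γ) (hxa : x ≠ a) (hxb : x ≠ b) :
    A.IsMissing (Function.update C s(a, b) β) x γ := by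
  intro y hxy
  rw [update_of_ne fun h => by simp_all]
  exact hx hxy

end Update

section Kempe

def kempeGraph (A : SimpleGraph V) (C : Sym2 V → κ) (α γ : κ) : SimpleGraph V where
  Adj x y := A.Adj x y ∧ (C s(x, y) = α ∨ C s(x, y) = γ)
  symm := ⟨fun x y h => by rwa [A.adj_comm, Sym2.eq_swap]⟩
  loopless := ⟨fun x h => A.loopless.irrefl x h.1⟩

@[simp]
lemma kempeGraph_adj : (A.kempeGraph C α γ).Adj x y ↔ A.Adj x y ∧ (C s(x, y) = α ∨ C s(x, y) = γ) :=
  Iff.rfl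

instance [DecidableRel A.Adj] [DecidableEq κ] : DecidableRel (A.kempeGraph C α γ).Adj :=
  fun _ _ => decidable_of_iff' _ kempeGraph_adj

variable [DecidableEq κ]

open Classical in
noncomputable def kempeSwap (c : (A.kempeGraph C α γ).ConnectedComponent) : Sym2 V → κ :=
  fun e => if e ∈ (c : Set V).sym2 then Equiv.swap α γ (C e) else C e

variable {c : (A.kempeGraph C α γ).ConnectedComponent}

lemma kempeSwap_mk_of_notMem (hx : x ∉ c) : kempeSwap c s(x, y) = C s(x, y) := by
  simp [kempeSwap, hx]

/-- An edge leaving the component has a color other than `α` and `γ`, which the swap fixes. -/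
lemma kempeSwap_mk_of_mem (hx : x ∈ c) (hxy : A.Adj x y) :
    kempeSwap c s(x, y) = Equiv.swap α γ (C s(x, y)) := by
  by_cases hy : y ∈ c
  · simp [kempeSwap, hx, hy]
  · have hcol : ¬(C s(x, y) = α ∨ C s(x, y) = γ) :=
      fun h => hy (c.mem_supp_of_adj_mem_supp hx (kempeGraph_adj.2 ⟨hxy, h⟩))
    push Not at hcol
    simp [kempeSwap, hy, Equiv.swap_apply_of_ne_of_ne hcol.1 hcol.2]

lemma IsEdgeColoring.kempeSwap (hC : A.IsEdgeColoring C) : A.IsEdgeColoring (kempeSwap c) := by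
  intro x y z hxy hxz hyz
  by_cases hx : x ∈ c
  · rw [kempeSwap_mk_of_mem hx hxy, kempeSwap_mk_of_mem hx hxz]
    exact (Equiv.injective _).ne (hC hxy hxz hyz)
  · rw [kempeSwap_mk_of_notMem hx, kempeSwap_mk_of_notMem hx]
    exact hC hxy hxz hyz

lemma IsMissing.kempeSwap_of_mem (hx : A.IsMissing C x β) (hxc : x ∈ c) :
    A.IsMissing (kempeSwap c) x (Equiv.swap α γ β) := by
  intro y hxy
  rw [kempeSwap_mk_of_mem hxc hxy]
  exact (Equiv.injective _).ne (hx hxy)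

lemma IsMissing.kempeSwap_of_notMem (hx : A.IsMissing C x β) (hxc : x ∉ c) :
    A.IsMissing (kempeSwap c) x β := by
  intro y hxy
  rw [kempeSwap_mk_of_notMem hxc]
  exact hx hxy

variable [Fintype V] [DecidableRel A.Adj]

lemma degree_kempeGraph_le_card (hC : A.IsEdgeColoring C) {s : Finset κ}
    (hs : ∀ ⦃y⦄, (A.kempeGraph C α γ).Adj x y → C s(x, y) ∈ s) :
    (A.kempeGraph C α γ).degree x ≤ #s := by
  rw [← card_neighborFinset_eq_degree]
  refine card_le_card_of_injOn (fun y => C s(x, y)) (fun y hy => hs ((mem_neighborFinset ..).1 hy))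
    fun y hy w hw hyw => ?_
  by_contra hne
  exact hC (kempeGraph_adj.1 ((mem_neighborFinset ..).1 hy)).1
    (kempeGraph_adj.1 ((mem_neighborFinset ..).1 hw)).1 hne hyw

lemma degree_kempeGraph_le_two (hC : A.IsEdgeColoring C) (x : V) :
    (A.kempeGraph C α γ).degree x ≤ 2 :=
  (degree_kempeGraph_le_card hC fun _ h => by simpa using (kempeGraph_adj.1 h).2).trans card_le_two

lemma degree_kempeGraph_le_one (hC : A.IsEdgeColoring C)
    (hx : A.IsMissing C x α ∨ A.IsMissing C x γ) : (A.kempeGraph C α γ).degree x ≤ 1 := by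
  rcases hx with hx | hx
  · exact degree_kempeGraph_le_card (s := {γ}) hC fun _ h => by
      simpa using (kempeGraph_adj.1 h).2.resolve_left (hx (kempeGraph_adj.1 h).1)
  · exact degree_kempeGraph_le_card (s := {α}) hC fun _ h => by
      simpa using (kempeGraph_adj.1 h).2.resolve_right (hx (kempeGraph_adj.1 h).1)

end Kempe

lemma ConnectedComponent.degree_toSimpleGraph [Fintype V] {H : SimpleGraph V} [DecidableRel H.Adj]
    (c : H.ConnectedComponent) (w : c) [Fintype (c.toSimpleGraph.neighborSet w)] :
    c.toSimpleGraph.degree w = H.degree w := by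
  classical
  convert degree_induce_of_neighborSet_subset (s := c.supp) (v := w)
    fun _ h => c.mem_supp_of_adj_mem_supp w.2 h
  exacts [Iff.rfl, rfl]

/-- A connected graph has at least as many edges as vertices minus one, so when all degrees are
at most two, at most two vertices have degree at most one. -/
lemma ConnectedComponent.eq_or_eq_or_eq_of_degree_le_one [Fintype V] {H : SimpleGraph V}
    [DecidableRel H.Adj] (hH : ∀ x, H.degree x ≤ 2) (c : H.ConnectedComponent)
    (hx : x ∈ c) (hy : y ∈ c) (hz : z ∈ c)
    (hdx : H.degree x ≤ 1) (hdy : H.degree y ≤ 1) (hdz : H.degree z ≤ 1) :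
    x = y ∨ x = z ∨ y = z := by
  classical
  by_contra! hne
  have hedges := c.connected_toSimpleGraph.card_vert_le_card_edgeSet_add_one
  have hsum := c.toSimpleGraph.sum_degrees_eq_twice_card_edges
  set X : Finset c := {⟨x, hx⟩, ⟨y, hy⟩, ⟨z, hz⟩}
  have hX : #X = 3 := by
    rw [card_eq_three]
    exact ⟨_, _, _, by simpa using hne.1, by simpa using hne.2.1, by simpa using hne.2.2, rfl⟩
  have hbound : ∑ w, c.toSimpleGraph.degree w + 3 ≤ 2 * Fintype.card c := by
    rw [← sum_sdiff (subset_univ X)]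
    have hout : ∑ w ∈ univ \ X, c.toSimpleGraph.degree w ≤ #(univ \ X) * 2 :=
      sum_le_card_nsmul _ _ _ fun w _ => (c.degree_toSimpleGraph w).trans_le (hH w)
    have hin : ∑ w ∈ X, c.toSimpleGraph.degree w ≤ 3 := by
      simp only [X]
      rw [sum_insert (by simpa using ⟨hne.1, hne.2.1⟩), sum_pair (by simpa using hne.2.2),
        c.degree_toSimpleGraph, c.degree_toSimpleGraph, c.degree_toSimpleGraph]
      dsimp only
      omega
    rw [card_sdiff_of_subset (subset_univ X), hX, card_univ] at hout
    have : 3 ≤ Fintype.card c := hX ▸ card_le_univ X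
    omega
  rw [Nat.card_eq_fintype_card, Nat.card_eq_fintype_card, ← edgeFinset_card] at hedges
  omega

section Critical

variable [DecidableEq V] {u v : V}

/-- For `A = G - uv` this says that no edge `κ`-coloring of `G - uv` extends to `G`. -/
def NoCommonMissingColor (A : SimpleGraph V) (κ : Type*) (u v : V) : Prop :=
  ∀ C : Sym2 V → κ, A.IsEdgeColoring C → ∀ β, ¬(A.IsMissing C u β ∧ A.IsMissing C v β)

lemma noCommonMissingColor_deleteEdges {G : SimpleGraph V} [Fintype κ]
    (hκ : (Fintype.card κ : ℕ∞) < G.chromaticIndex) :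
    (G.deleteEdges {s(u, v)}).NoCommonMissingColor κ u v := fun _ hC _ ⟨hu, hv⟩ =>
  hκ.not_ge (hC.update hu hv).colorable.chromaticNumber_le

namespace NoCommonMissingColor

variable [Fintype V] [DecidableRel A.Adj] [Fintype κ] [DecidableEq κ]
  (hA : A.NoCommonMissingColor κ u v) (hdeg : A.degree u + A.degree v ≤ Fintype.card κ)
  (huv : u ≠ v) (hC : A.IsEdgeColoring C) (huz : A.Adj u z) (hzv : z ≠ v)
include hA hdeg huv hC huz hzv

/-- Recoloring `uz` with `β` frees its old color at `u`; that color is missing at `v` already. -/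
lemma not_isMissing_and_isMissing_of_adj : ¬(A.IsMissing C u β ∧ A.IsMissing C z β) := by
  rintro ⟨hu, hz⟩
  have hC' : A.IsEdgeColoring (Function.update C s(u, z) β) :=
    (hC.mono (deleteEdges_le _)).update (hu.mono (deleteEdges_le _)) (hz.mono (deleteEdges_le _))
  have hv : A.IsMissing C v (C s(u, z)) :=
    (isMissing_or_isMissing hdeg (hA C hC) _).resolve_left fun h => h huz rfl
  exact hA _ hC' _ ⟨hC.isMissing_update huz (hu huz), hv.update huv.symm hzv.symm⟩

lemma mem_connectedComponentMk_kempeGraph (hα : A.IsMissing C u α) (hγv : A.IsMissing C v γ)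
    (hγz : A.IsMissing C z γ) :
    u ∈ (A.kempeGraph C α γ).connectedComponentMk z ∧
      v ∈ (A.kempeGraph C α γ).connectedComponentMk z := by
  set c := (A.kempeGraph C α γ).connectedComponentMk z
  have hC' : A.IsEdgeColoring (kempeSwap c) := hC.kempeSwap
  by_cases hu : u ∈ c <;> by_cases hv : v ∈ c
  · exact ⟨hu, hv⟩
  · exact (hA _ hC' γ ⟨by simpa using hα.kempeSwap_of_mem hu, hγv.kempeSwap_of_notMem hv⟩).elim
  · exact (hA _ hC' α ⟨hα.kempeSwap_of_notMem hu, by simpa using hγv.kempeSwap_of_mem hv⟩).elim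
  · refine (not_isMissing_and_isMissing_of_adj hA hdeg huv hC' huz hzv
      ⟨hα.kempeSwap_of_notMem hu, ?_⟩).elim
    simpa using hγz.kempeSwap_of_mem (c := c) ConnectedComponent.connectedComponentMk_mem

lemma card_le_degree_of_adj (hu : A.degree u < Fintype.card κ) : Fintype.card κ ≤ A.degree z := by
  by_contra! hz
  obtain ⟨γ, hγz⟩ := exists_isMissing_of_degree_lt (C := C) hz
  have hγv : A.IsMissing C v γ := (isMissing_or_isMissing hdeg (hA C hC) γ).resolve_left
    fun hγu => not_isMissing_and_isMissing_of_adj hA hdeg huv hC huz hzv ⟨hγu, hγz⟩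
  obtain ⟨α, hα⟩ := exists_isMissing_of_degree_lt (C := C) hu
  obtain ⟨huc, hvc⟩ := mem_connectedComponentMk_kempeGraph hA hdeg huv hC huz hzv hα hγv hγz
  rcases ConnectedComponent.eq_or_eq_or_eq_of_degree_le_one (degree_kempeGraph_le_two hC) _ huc hvc
    ConnectedComponent.connectedComponentMk_mem (degree_kempeGraph_le_one hC (.inl hα))
    (degree_kempeGraph_le_one hC (.inr hγv)) (degree_kempeGraph_le_one hC (.inr hγz))
    with h | h | h
  exacts [huv h, huz.ne h, hzv h.symm]

end NoCommonMissingColor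

lemma degree_deleteEdges_add_one [Fintype V] {G : SimpleGraph V} [DecidableRel G.Adj]
    (huv : G.Adj u v) : (G.deleteEdges {s(u, v)}).degree u + 1 = G.degree u := by
  rw [← card_neighborFinset_eq_degree, ← card_neighborFinset_eq_degree,
    ← card_erase_add_one ((G.mem_neighborFinset u v).2 huv)]
  congr 2
  ext w
  simp [huv.ne, and_comm, eq_comm]

end Critical

lemma IsDeltaCritical.degree_eq_maxDegree_of_adj [Fintype V] {G : SimpleGraph V}
    [DecidableRel G.Adj] (hG : G.IsDeltaCritical) {u v z : V} (huv : G.Adj u v)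
    (hsum : G.degree u + G.degree v = G.maxDegree + 2) (huz : G.Adj u z) (hzv : z ≠ v) :
    G.degree z = G.maxDegree := by
  classical
  obtain ⟨-, hχ, hcrit⟩ := hG
  have hΔ : 0 < G.maxDegree :=
    ((G.degree_pos_iff_exists_adj u).2 ⟨v, huv⟩).trans_le (G.degree_le_maxDegree u)
  have hκ : (Fintype.card (Fin G.maxDegree) : ℕ∞) < G.chromaticIndex := by
    rw [Fintype.card_fin, hχ]
    exact ENat.lt_add_one_iff (ENat.natCast_ne_top _) |>.2 le_rfl
  obtain ⟨C, hC⟩ : ∃ C : Sym2 V → Fin G.maxDegree, (G.deleteEdges {s(u, v)}).IsEdgeColoring C :=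
    Colorable.exists_isEdgeColoring
      (chromaticNumber_le_iff_colorable.1 (Order.le_of_lt_add_one (hχ ▸ hcrit _ huv))) hΔ
  have hdu := degree_deleteEdges_add_one huv
  have hdv := degree_deleteEdges_add_one huv.symm
  rw [Sym2.eq_swap] at hdv
  have hdeg : (G.deleteEdges {s(u, v)}).degree u + (G.deleteEdges {s(u, v)}).degree v ≤
      Fintype.card (Fin G.maxDegree) := by
    rw [Fintype.card_fin]; omega
  have hu : (G.deleteEdges {s(u, v)}).degree u < Fintype.card (Fin G.maxDegree) := by
    rw [Fintype.card_fin]; have := G.degree_le_maxDegree u; omega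
  have huz' : (G.deleteEdges {s(u, v)}).Adj u z :=
    deleteEdges_adj.2 ⟨huz, fun h => hzv (Sym2.congr_right.1 h)⟩
  have hz := (noCommonMissingColor_deleteEdges hκ).card_le_degree_of_adj hdeg huv.ne hC huz' hzv hu
  rw [Fintype.card_fin] at hz
  exact le_antisymm (G.degree_le_maxDegree z) (hz.trans (degree_le_of_le (deleteEdges_le _)))

end SimpleGraph

theorem critical_neighbors_max_degree [Fintype V] (G : SimpleGraph V) [DecidableRel G.Adj]
    (hG : G.IsDeltaCritical) {u v : V} (huv : G.Adj u v)
    (hsum : G.degree u + G.degree v = G.maxDegree + 2) :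
    ∀ z ∈ G.setNbhd {u, v}, G.degree z = G.maxDegree := by
  rintro z ⟨hz, w, hw, hwz⟩
  rcases hw with rfl | rfl
  · exact hG.degree_eq_maxDegree_of_adj huv hsum hwz fun h => hz (by simp [h])
  · exact hG.degree_eq_maxDegree_of_adj huv.symm (by omega) hwz fun h => hz (by simp [h])
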